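/- arXiv:1712.02690 — 4 statements merged into one kernel-verified Lean document; each statement's English description precedes it below -/
import Mathlib

section
/- For every erasure probability ε ∈ [0,1] and every integer k ≥ 1, the maximum of R_ε(δ₀,…,δ_{k−1}) over the cube [0,1/2]^k equals its maximum over the cube [0,1]^k; that is, max over {0 ≤ δ₀,…,δ_{k−1} ≤ 1/2} of R_ε(δ₀,…,δ_{k−1}) = max over {0 ≤ δ₀,…,δ_{k−1} ≤ 1} of R_ε(δ₀,…,δ_{k−1}). -/
/-!
Let `M` be the maximum of `R_ε` over `[0,1]^k` (compactness) and linearise the fraction at `M`: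
`W(δ) = N(δ) - M (D(δ) - 1)`, where `R_ε = N / D`. Then `R_ε ≤ M ↔ W ≤ M`, with equality at
a maximiser, and `W(δ₀, δ') = ε̄ (H₂(δ₀) - δ₀ (M - W(δ')))`, where `W(δ') ≤ M` for every
shorter tail `δ'` (pad it with a zero). Since `H₂` is symmetric about `1/2`, replacing each `δᵢ`
by `min δᵢ (1 - δᵢ)` does not decrease `W`, so it moves the maximiser into `[0,1/2]^k`.
-/

/-- The binary entropy function (base 2), with `H2 0 = H2 1 = 0`. -/
noncomputable def H2 (x : ℝ) : ℝ := -(x * Real.logb 2 x) - (1 - x) * Real.logb 2 (1 - x)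

/-- The function `R_ε(δ₀,…,δ_{k−1})`:
`(ε̄·H₂(δ₀) + Σ_{i=1}^{k−1} ε̄^{i+1}·H₂(δ_i)·Π_{m=0}^{i−1} δ_m) /
 (1 + Σ_{i=0}^{k−1} ε̄^{i+1}·Π_{m=0}^{i} δ_m)`,
where the numerator has been written as the single sum `Σ_{i=0}^{k−1}`. -/
noncomputable def Rfun (ε : ℝ) (k : ℕ) (δ : ℕ → ℝ) : ℝ :=
  (∑ i ∈ Finset.range k, (1 - ε) ^ (i + 1) * H2 (δ i) * ∏ m ∈ Finset.range i, δ m) /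
  (1 + ∑ i ∈ Finset.range k, (1 - ε) ^ (i + 1) * ∏ m ∈ Finset.range (i + 1), δ m)

open Finset Set

lemma H2_eq_binEntropy_div_log_two (x : ℝ) : H2 x = Real.binEntropy x / Real.log 2 := by
  rw [Real.binEntropy_eq_negMulLog_add_negMulLog_one_sub]
  simp only [H2, Real.negMulLog, Real.logb]
  ring

@[fun_prop]
lemma continuous_H2 : Continuous H2 := by
  simp only [funext H2_eq_binEntropy_div_log_two]
  fun_prop

@[simp] lemma H2_zero : H2 0 = 0 := by simp [H2_eq_binEntropy_div_log_two]

lemma H2_one_sub (x : ℝ) : H2 (1 - x) = H2 x := by simp [H2_eq_binEntropy_div_log_two]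

lemma H2_min_one_sub (x : ℝ) : H2 (min x (1 - x)) = H2 x := by
  rcases min_choice x (1 - x) with h | h <;> rw [h]
  exact H2_one_sub x

lemma H2_sub_mul_le_min (x : ℝ) {t : ℝ} (ht : 0 ≤ t) :
    H2 x - x * t ≤ H2 (min x (1 - x)) - min x (1 - x) * t := by
  rw [H2_min_one_sub]
  linarith [mul_le_mul_of_nonneg_right (min_le_left x (1 - x)) ht]

noncomputable def foldHalf (δ : ℕ → ℝ) : ℕ → ℝ := fun i => min (δ i) (1 - δ i)

lemma foldHalf_mem_Icc {δ : ℕ → ℝ} {i : ℕ} (h : δ i ∈ Icc (0 : ℝ) 1) :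
    foldHalf δ i ∈ Icc (0 : ℝ) (1 / 2) := by
  obtain ⟨h0, h1⟩ := h
  rcases le_total (δ i) (1 - δ i) with h | h
  · rw [foldHalf, min_eq_left h]
    exact ⟨h0, by linarith⟩
  · rw [foldHalf, min_eq_right h]
    exact ⟨by linarith, by linarith⟩

section Linearisation

variable {ε M : ℝ} {k n : ℕ} {δ δ' : ℕ → ℝ}

noncomputable def Rnum (ε : ℝ) (k : ℕ) (δ : ℕ → ℝ) : ℝ :=
  ∑ i ∈ range k, (1 - ε) ^ (i + 1) * H2 (δ i) * ∏ m ∈ range i, δ m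

noncomputable def Rden (ε : ℝ) (k : ℕ) (δ : ℕ → ℝ) : ℝ :=
  1 + ∑ i ∈ range k, (1 - ε) ^ (i + 1) * ∏ m ∈ range (i + 1), δ m

noncomputable def Rlin (ε M : ℝ) (k : ℕ) (δ : ℕ → ℝ) : ℝ :=
  ∑ i ∈ range k, (1 - ε) ^ (i + 1) * (H2 (δ i) - M * δ i) * ∏ m ∈ range i, δ m

lemma Rfun_eq_div : Rfun ε k δ = Rnum ε k δ / Rden ε k δ := rfl

lemma continuous_Rnum : Continuous (Rnum ε k) := by
  unfold Rnum
  fun_prop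

lemma continuous_Rden : Continuous (Rden ε k) := by
  unfold Rden
  fun_prop

lemma Rden_pos (hε : ε ≤ 1) (hδ : ∀ i < k, 0 ≤ δ i) : 0 < Rden ε k δ := by
  have hsum : 0 ≤ ∑ i ∈ range k, (1 - ε) ^ (i + 1) * ∏ m ∈ range (i + 1), δ m :=
    sum_nonneg fun i hi => mul_nonneg (pow_nonneg (by linarith) _) <| prod_nonneg fun m hm =>
      hδ m ((mem_range.1 hm).trans_le (mem_range.1 hi))
  unfold Rden
  linarith

lemma Rlin_eq : Rlin ε M k δ = Rnum ε k δ - M * (Rden ε k δ - 1) := by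
  simp only [Rlin, Rnum, Rden, add_sub_cancel_left, mul_sum, ← sum_sub_distrib, prod_range_succ]
  exact sum_congr rfl fun i _ => by ring

lemma Rfun_le_iff (hε : ε ≤ 1) (hδ : ∀ i < k, 0 ≤ δ i) :
    Rfun ε k δ ≤ M ↔ Rlin ε M k δ ≤ M := by
  rw [Rfun_eq_div, div_le_iff₀ (Rden_pos hε hδ), Rlin_eq]
  constructor <;> intro h <;> linarith

lemma le_Rfun_iff (hε : ε ≤ 1) (hδ : ∀ i < k, 0 ≤ δ i) :
    M ≤ Rfun ε k δ ↔ M ≤ Rlin ε M k δ := by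
  rw [Rfun_eq_div, le_div_iff₀ (Rden_pos hε hδ), Rlin_eq]
  constructor <;> intro h <;> linarith

lemma Rlin_congr (h : ∀ i < k, δ i = δ' i) : Rlin ε M k δ = Rlin ε M k δ' :=
  sum_congr rfl fun i hi => by
    have hik := mem_range.1 hi
    rw [h i hik, prod_congr rfl fun m hm => h m ((mem_range.1 hm).trans hik)]

lemma Rlin_succ (ε M : ℝ) (n : ℕ) (δ : ℕ → ℝ) :
    Rlin ε M (n + 1) δ =
      (1 - ε) * (H2 (δ 0) - δ 0 * (M - Rlin ε M n fun i => δ (i + 1))) := by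
  simp only [Rlin, sum_range_succ', prod_range_succ', prod_range_zero]
  have htail : ∑ i ∈ range n, (1 - ε) ^ (i + 1 + 1) * (H2 (δ (i + 1)) - M * δ (i + 1)) *
        ((∏ m ∈ range i, δ (m + 1)) * δ 0) =
      (1 - ε) * δ 0 * ∑ i ∈ range n, (1 - ε) ^ (i + 1) * (H2 (δ (i + 1)) - M * δ (i + 1)) *
        ∏ m ∈ range i, δ (m + 1) := by
    rw [mul_sum]
    exact sum_congr rfl fun i _ => by ring
  rw [htail]
  ring

lemma Rlin_eq_of_apply_eq_zero (hn : n ≤ k) (h0 : δ n = 0) : Rlin ε M k δ = Rlin ε M n δ := by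
  refine (sum_subset (range_subset_range.2 hn) fun i _ hi => ?_).symm
  rcases (not_lt.1 (mem_range.not.1 hi)).eq_or_lt with rfl | hlt
  · simp [h0]
  · simp [prod_eq_zero (mem_range.2 hlt) h0]

lemma Rlin_le_of_forall_Rfun_le (hε : ε ≤ 1)
    (hR : ∀ δ : ℕ → ℝ, (∀ i, δ i ∈ Icc (0 : ℝ) 1) → Rfun ε k δ ≤ M) (hn : n ≤ k)
    (hδ : ∀ i < n, δ i ∈ Icc (0 : ℝ) 1) : Rlin ε M n δ ≤ M := by
  set δ₀ : ℕ → ℝ := fun i => if i < n then δ i else 0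
  have hδ₀ : ∀ i, δ₀ i ∈ Icc (0 : ℝ) 1 := fun i => by
    by_cases h : i < n <;> simp [δ₀, h, hδ i]
  calc Rlin ε M n δ = Rlin ε M n δ₀ := Rlin_congr fun i hi => by simp [δ₀, hi]
    _ = Rlin ε M k δ₀ := (Rlin_eq_of_apply_eq_zero hn (by simp [δ₀])).symm
    _ ≤ M := (Rfun_le_iff hε fun i _ => (hδ₀ i).1).1 (hR δ₀ hδ₀)

lemma Rlin_le_Rlin_foldHalf (hε : ε ≤ 1)
    (hM : ∀ n < k, ∀ τ : ℕ → ℝ, (∀ i < n, τ i ∈ Icc (0 : ℝ) 1) → Rlin ε M n τ ≤ M)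
    (hδ : ∀ i < k, δ i ∈ Icc (0 : ℝ) 1) : Rlin ε M k δ ≤ Rlin ε M k (foldHalf δ) := by
  induction k generalizing δ with
  | zero => exact le_rfl
  | succ n ih =>
    have htail : ∀ i < n, δ (i + 1) ∈ Icc (0 : ℝ) 1 := fun i hi => hδ (i + 1) (by omega)
    have hfold := ih (fun m hm => hM m (by omega)) htail
    have hle := hM n (lt_add_one n) _ htail
    rw [Rlin_succ, Rlin_succ]
    refine mul_le_mul_of_nonneg_left ?_ (by linarith)
    calc H2 (δ 0) - δ 0 * (M - Rlin ε M n fun i => δ (i + 1))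
        ≤ H2 (foldHalf δ 0) - foldHalf δ 0 * (M - Rlin ε M n fun i => δ (i + 1)) :=
          H2_sub_mul_le_min _ (sub_nonneg.2 hle)
      _ ≤ H2 (foldHalf δ 0) - foldHalf δ 0 * (M - Rlin ε M n fun i => foldHalf δ (i + 1)) := by
          have hf0 : 0 ≤ foldHalf δ 0 := (foldHalf_mem_Icc (hδ 0 n.succ_pos)).1
          gcongr
          exact hfold

end Linearisation

lemma exists_isMaxOn_Rfun {ε : ℝ} (hε : ε ≤ 1) (k : ℕ) :
    ∃ δ ∈ univ.pi fun _ => Icc (0 : ℝ) 1,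
      IsMaxOn (Rfun ε k) (univ.pi fun _ => Icc (0 : ℝ) 1) δ :=
  (isCompact_univ_pi fun _ => isCompact_Icc).exists_isMaxOn
    ⟨fun _ => 0, fun _ _ => ⟨le_rfl, zero_le_one⟩⟩ <|
    continuous_Rnum.continuousOn.div continuous_Rden.continuousOn fun _ hδ =>
      (Rden_pos hε fun i _ => (hδ i (mem_univ i)).1).ne'

theorem max_over_half_cube_eq_max_over_cube_general
    (ε : ℝ) (hε : ε ∈ Set.Icc (0 : ℝ) 1) (k : ℕ) :
    ∃ M : ℝ,
      IsGreatest {r : ℝ | ∃ δ : ℕ → ℝ,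
        (∀ i < k, δ i ∈ Set.Icc (0 : ℝ) (1 / 2)) ∧ r = Rfun ε k δ} M ∧
      IsGreatest {r : ℝ | ∃ δ : ℕ → ℝ,
        (∀ i < k, δ i ∈ Set.Icc (0 : ℝ) 1) ∧ r = Rfun ε k δ} M := by
  obtain ⟨δ, hδ, hmax⟩ := exists_isMaxOn_Rfun hε.2 k
  set M := Rfun ε k δ
  have hcube : ∀ i < k, δ i ∈ Icc (0 : ℝ) 1 := fun i _ => hδ i (mem_univ i)
  have hlin : ∀ n ≤ k, ∀ τ : ℕ → ℝ, (∀ i < n, τ i ∈ Icc (0 : ℝ) 1) → Rlin ε M n τ ≤ M :=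
    fun n hn τ => Rlin_le_of_forall_Rfun_le hε.2 (fun τ hτ => hmax fun i _ => hτ i) hn
  have hle : ∀ τ : ℕ → ℝ, (∀ i < k, τ i ∈ Icc (0 : ℝ) 1) → Rfun ε k τ ≤ M :=
    fun τ hτ => (Rfun_le_iff hε.2 fun i hi => (hτ i hi).1).2 (hlin k le_rfl τ hτ)
  have hhalf : ∀ i < k, foldHalf δ i ∈ Icc (0 : ℝ) (1 / 2) :=
    fun i hi => foldHalf_mem_Icc (hcube i hi)
  have half_sub : Icc (0 : ℝ) (1 / 2) ⊆ Icc 0 1 := Icc_subset_Icc_right (by norm_num)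
  have hfold : M ≤ Rfun ε k (foldHalf δ) := by
    rw [le_Rfun_iff hε.2 fun i hi => (hhalf i hi).1]
    calc M ≤ Rlin ε M k δ := (le_Rfun_iff hε.2 fun i hi => (hcube i hi).1).1 le_rfl
      _ ≤ Rlin ε M k (foldHalf δ) := Rlin_le_Rlin_foldHalf hε.2 (fun n hn => hlin n hn.le) hcube
  refine ⟨M, ⟨⟨foldHalf δ, hhalf, ?_⟩, ?_⟩, ⟨δ, hcube, rfl⟩, fun r ⟨τ, hτ, hr⟩ => hr ▸ hle τ hτ⟩
  · exact le_antisymm hfold (hle _ fun i hi => half_sub (hhalf i hi))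
  · rintro r ⟨τ, hτ, rfl⟩
    exact hle τ fun i hi => half_sub (hτ i hi)

/-- For every `ε ∈ [0,1]` and integer `k ≥ 1`, the maximum of `R_ε` over the cube
`[0,1/2]^k` equals its maximum over the cube `[0,1]^k`. -/
theorem max_over_half_cube_eq_max_over_cube
    (ε : ℝ) (hε : ε ∈ Set.Icc (0 : ℝ) 1) (k : ℕ) (hk : 1 ≤ k) :
    ∃ M : ℝ,
      IsGreatest {r : ℝ | ∃ δ : ℕ → ℝ,
        (∀ i < k, δ i ∈ Set.Icc (0 : ℝ) (1 / 2)) ∧ r = Rfun ε k δ} M ∧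
      IsGreatest {r : ℝ | ∃ δ : ℕ → ℝ,
        (∀ i < k, δ i ∈ Set.Icc (0 : ℝ) 1) ∧ r = Rfun ε k δ} M :=
  max_over_half_cube_eq_max_over_cube_general ε hε k
end

section
/- Let ε ∈ [0,1] with ε̄ = 1 − ε, let k ≥ 2 be an integer, and suppose (δ₀,…,δ_{k−1}) ∈ (0,1)^k satisfies the recursion (∗): δ_j = δ_{j+1} / (δ_{j+1} + (1−δ_{j+1})·((1−δ_{j+1})/(1−δ_{j+2}))^{ε̄}) for j = 0,…,k−2 with the convention δ̄_k := 1. Then the coordinates are monotone non-increasing: δ₀ ≥ δ₁ ≥ … ≥ δ_{k−1}. -/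
/-!
Each step of the recursion has the form `δ_j = a / (a + (1 - a) t)` with `a = δ_{j+1}`, and such
a quotient is at least `a` as soon as `t ∈ [0, 1]`. Here `t = ((1 - δ_{j+1}) / (1 - δ_{j+2}))^{ε̄}`,
which lies in `[0, 1]` as soon as `δ_{j+2} ≤ δ_{j+1}`, and always at the last index, where the
ratio is `1 - δ_{k-1}`. So monotonicity propagates downwards from `j = k - 2`.
-/

/-- The recursion (∗): for every `j = 0,…,k−2`,
`δ_j = δ_{j+1} / (δ_{j+1} + (1−δ_{j+1})·((1−δ_{j+1})/(1−δ_{j+2}))^{ε̄})`,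
with the convention `δ̄_k := 1` (so for `j = k−2` the equation reads
`δ_{k−2} = δ_{k−1}/(δ_{k−1} + (1−δ_{k−1})^{1+ε̄})`). -/
def SatisfiesRec (ε : ℝ) (k : ℕ) (δ : ℕ → ℝ) : Prop :=
  ∀ j : ℕ, j + 2 ≤ k →
    δ j = δ (j + 1) /
      (δ (j + 1) + (1 - δ (j + 1)) *
        ((1 - δ (j + 1)) / (if j + 2 = k then 1 else 1 - δ (j + 2))) ^ (1 - ε))

lemma le_div_add_one_sub_mul {a t : ℝ} (ha : 0 < a) (ha1 : a ≤ 1) (ht : 0 ≤ t) (ht1 : t ≤ 1) :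
    a ≤ a / (a + (1 - a) * t) := by
  have hd : 0 < a + (1 - a) * t := by nlinarith
  rw [le_div_iff₀ hd]
  nlinarith [mul_nonneg (mul_nonneg ha.le (sub_nonneg.2 ha1)) (sub_nonneg.2 ht1)]

namespace SatisfiesRec

variable {ε : ℝ} {k : ℕ} {δ : ℕ → ℝ}

lemma succ_le (hrec : SatisfiesRec ε k δ) (hε : ε ≤ 1) (hδ : ∀ i < k, δ i ∈ Set.Ioo (0 : ℝ) 1)
    {j : ℕ} (hj : j + 2 ≤ k) (hnext : j + 2 < k → δ (j + 2) ≤ δ (j + 1)) :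
    δ (j + 1) ≤ δ j := by
  obtain ⟨hpos, hlt⟩ := hδ (j + 1) (by omega)
  set r := (1 - δ (j + 1)) / (if j + 2 = k then 1 else 1 - δ (j + 2))
  obtain ⟨hr_pos, hr_le⟩ : 0 < r ∧ r ≤ 1 := by
    by_cases hlast : j + 2 = k
    · simp only [r, if_pos hlast, div_one]
      constructor <;> linarith
    · simp only [r, if_neg hlast]
      have hlt₂ := (hδ (j + 2) (by omega)).2
      exact ⟨div_pos (by linarith) (by linarith),
        (div_le_one (by linarith)).2 (by linarith [hnext (by omega)])⟩
  rw [hrec j hj]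
  exact le_div_add_one_sub_mul hpos hlt.le (Real.rpow_nonneg hr_pos.le _)
    (Real.rpow_le_one hr_pos.le hr_le (by linarith))

end SatisfiesRec

theorem recursion_implies_monotone_general
    (ε : ℝ) (hε : ε ∈ Set.Icc (0 : ℝ) 1) (k : ℕ)
    (δ : ℕ → ℝ) (hδ : ∀ i < k, δ i ∈ Set.Ioo (0 : ℝ) 1)
    (hrec : SatisfiesRec ε k δ) :
    ∀ j : ℕ, j + 1 < k → δ (j + 1) ≤ δ j := by
  intro j hj
  induction h : k - (j + 2) generalizing j with
  | zero => exact hrec.succ_le hε.2 hδ (by omega) (by omega)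
  | succ n ih => exact hrec.succ_le hε.2 hδ (by omega) fun _ => ih (j + 1) (by omega) (by omega)

/-- Let `ε ∈ [0,1]`, let `k ≥ 2`, and suppose `(δ₀,…,δ_{k−1}) ∈ (0,1)^k` satisfies the
recursion (∗).  Then the coordinates are monotone non-increasing:
`δ₀ ≥ δ₁ ≥ … ≥ δ_{k−1}`. -/
theorem recursion_implies_monotone
    (ε : ℝ) (hε : ε ∈ Set.Icc (0 : ℝ) 1) (k : ℕ) (hk : 2 ≤ k)
    (δ : ℕ → ℝ) (hδ : ∀ i < k, δ i ∈ Set.Ioo (0 : ℝ) 1)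
    (hrec : SatisfiesRec ε k δ) :
    ∀ j : ℕ, j + 1 < k → δ (j + 1) ≤ δ j :=
  recursion_implies_monotone_general ε hε k δ hδ hrec
end

section
/- The following strict inequality between two optimization values holds: sup over {(δ₀, δ₁, δ₂) ∈ [0,1]³ with δ₀ + δ₁ + δ₂ ≤ 1} of [ (1/2)·(H₂(δ₀) + (1/2)·H₂(δ₁) + (1/4)·H₂(δ₂)) ] / [ 7/4 + δ₀ + (1/2)·δ₁ + (1/4)·δ₂ ] < max over {δ ∈ [0, 1/2]} of H₂(δ)/(2 + 2δ). (The left-hand side is the Q-graph upper bound on the feedback capacity of the (2,∞)-RLL input-constrained BEC at erasure probability ε = 1/2, and the right-hand side is the non-causal capacity of the same channel; hence non-causal knowledge of erasures strictly increases capacity in this case.) -/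
/-!
Both sides are bounded through the tangent lines of the concave function `H2`:
`H2 x ≤ -x log₂ p - (1 - x) log₂ (1 - p)` for every `p ∈ (0, 1)`.
At `p = φ⁻²` (with `φ` the golden ratio, so `1 - p = φ⁻¹`) the tangent line is
`log₂ φ · (1 + x)`, which is attained at `x = φ⁻²`; hence the right-hand maximum is
`log₂ φ / 2 ≈ 0.3471`. Without the constraint `δ₀ + δ₁ + δ₂ ≤ 1` the left-hand supremum
would be the same number, attained at `δ₀ = δ₁ = δ₂ = φ⁻²`; the constraint pushes the
maximiser to about `(0.36, 0.34, 0.30)`, and the tangent lines there bound the left-hand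
ratio by a linear-fractional function whose maximum over the simplex, taken at a vertex,
is below `0.346 < log₂ φ / 2`.
-/

open Real goldenRatio

lemma H2_eq_negMulLog_add_div (x : ℝ) : H2 x = (negMulLog x + negMulLog (1 - x)) / log 2 := by
  simp only [H2, negMulLog, logb]
  ring

lemma negMulLog_le_tangent {x p : ℝ} (hx : 0 ≤ x) (hp : 0 < p) :
    negMulLog x ≤ -(x * log p) + p - x := by
  have hmul := negMulLog_mul p (x / p)
  rw [mul_div_cancel₀ x hp.ne'] at hmul
  have hle := negMulLog_le_one_sub_self (div_nonneg hx hp.le)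
  rw [hmul, negMulLog]
  calc x / p * (-p * log p) + p * negMulLog (x / p)
      ≤ x / p * (-p * log p) + p * (1 - x / p) := by gcongr
    _ = -(x * log p) + p - x := by field_simp; ring

lemma H2_le_of_le_logb {x p a b : ℝ} (hx0 : 0 ≤ x) (hx1 : x ≤ 1) (hp0 : 0 < p) (hp1 : p < 1)
    (ha : a ≤ logb 2 p) (hb : b ≤ logb 2 (1 - p)) : H2 x ≤ -(a * x) - b * (1 - x) := by
  have hcross : H2 x ≤ -(x * logb 2 p) - (1 - x) * logb 2 (1 - p) := by
    rw [H2_eq_negMulLog_add_div, div_le_iff₀ (log_pos one_lt_two)]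
    have h0 := negMulLog_le_tangent hx0 hp0
    have h1 := negMulLog_le_tangent (sub_nonneg.2 hx1) (sub_pos.2 hp1)
    have hlog2 : log 2 ≠ 0 := (log_pos one_lt_two).ne'
    simp only [logb, sub_mul, neg_mul, mul_assoc, div_mul_cancel₀ _ hlog2]
    linarith
  linarith [mul_le_mul_of_nonneg_right ha hx0, mul_le_mul_of_nonneg_right hb (sub_nonneg.2 hx1)]

lemma div_le_logb_of_zpow_le_pow {b q : ℝ} {a : ℤ} {n : ℕ} (hb : 1 < b) (hn : n ≠ 0)
    (h : b ^ a ≤ q ^ n) : (a / n : ℝ) ≤ logb b q := by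
  have hlog := logb_le_logb_of_le hb (zpow_pos (by linarith) a) h
  rw [← rpow_intCast, logb_rpow (by linarith) (by linarith), logb_pow] at hlog
  rw [div_le_iff₀ (by positivity)]
  linarith

lemma H2_le_of_zpow_le_pow {x p : ℝ} {a b : ℤ} {n m : ℕ} (hx0 : 0 ≤ x) (hx1 : x ≤ 1)
    (hp0 : 0 < p) (hp1 : p < 1) (hn : n ≠ 0) (hm : m ≠ 0) (ha : (2 : ℝ) ^ a ≤ p ^ n)
    (hb : (2 : ℝ) ^ b ≤ (1 - p) ^ m) : H2 x ≤ -(a / n * x) - b / m * (1 - x) :=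
  H2_le_of_le_logb hx0 hx1 hp0 hp1 (div_le_logb_of_zpow_le_pow one_lt_two hn ha)
    (div_le_logb_of_zpow_le_pow one_lt_two hm hb)

lemma one_sub_inv_sq_of_sq_eq_add_one {x : ℝ} (hx : x ^ 2 = x + 1) : 1 - x⁻¹ ^ 2 = x⁻¹ := by
  have hx0 : x ≠ 0 := by rintro rfl; norm_num at hx
  field_simp
  linear_combination hx

lemma one_sub_inv_goldenRatio_sq : 1 - φ⁻¹ ^ 2 = φ⁻¹ :=
  one_sub_inv_sq_of_sq_eq_add_one goldenRatio_sq

lemma logb_inv_goldenRatio_sq : logb 2 (φ⁻¹ ^ 2) = -(2 * logb 2 φ) := by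
  rw [logb_pow, logb_inv]
  push_cast
  ring

lemma H2_le_logb_goldenRatio_mul {x : ℝ} (hx0 : 0 ≤ x) (hx1 : x ≤ 1) :
    H2 x ≤ logb 2 φ * (1 + x) := by
  have hp0 : 0 < φ⁻¹ ^ 2 := by positivity
  have hp1 : φ⁻¹ ^ 2 < 1 := pow_lt_one₀ (by positivity) (inv_lt_one_of_one_lt₀ one_lt_goldenRatio)
    two_ne_zero
  have h := H2_le_of_le_logb hx0 hx1 hp0 hp1 logb_inv_goldenRatio_sq.ge
    (by rw [one_sub_inv_goldenRatio_sq, logb_inv])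
  linarith

lemma H2_inv_goldenRatio_sq : H2 (φ⁻¹ ^ 2) = logb 2 φ * (1 + φ⁻¹ ^ 2) := by
  rw [H2, one_sub_inv_goldenRatio_sq, logb_inv_goldenRatio_sq, logb_inv]
  linear_combination (-logb 2 φ) * one_sub_inv_goldenRatio_sq

lemma isGreatest_H2_div_two_add_two_mul :
    IsGreatest ((fun δ : ℝ => H2 δ / (2 + 2 * δ)) '' Set.Icc 0 (1 / 2)) (logb 2 φ / 2) := by
  refine ⟨⟨φ⁻¹ ^ 2, ⟨by positivity, ?_⟩, ?_⟩, ?_⟩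
  · have : 1 / 2 < φ⁻¹ := by
      rw [one_div, inv_lt_inv₀ two_pos goldenRatio_pos]
      exact goldenRatio_lt_two
    linarith [one_sub_inv_goldenRatio_sq]
  · have hpos : 0 < 1 + φ⁻¹ ^ 2 := by positivity
    simp only [H2_inv_goldenRatio_sq]
    field_simp
  · rintro _ ⟨x, ⟨hx0, hx1⟩, rfl⟩
    rw [div_le_iff₀ (by linarith)]
    linarith [H2_le_logb_goldenRatio_mul hx0 (by linarith : x ≤ 1)]

lemma nine_div_thirteen_le_logb_two_goldenRatio : (9 / 13 : ℝ) ≤ logb 2 φ := by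
  have hφ : (1618 / 1000 : ℝ) ≤ φ := by nlinarith [goldenRatio_sq, one_lt_goldenRatio]
  have h := div_le_logb_of_zpow_le_pow (q := φ) (a := 9) (n := 13) one_lt_two
    (by norm_num) ((by norm_num : (2 : ℝ) ^ (9 : ℤ) ≤ (1618 / 1000) ^ 13).trans (by gcongr))
  convert h using 1
  norm_num

lemma feedback_ratio_le {d0 d1 d2 : ℝ} (hd0 : d0 ∈ Set.Icc (0 : ℝ) 1)
    (hd1 : d1 ∈ Set.Icc (0 : ℝ) 1) (hd2 : d2 ∈ Set.Icc (0 : ℝ) 1) (hsum : d0 + d1 + d2 ≤ 1) :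
    (1 / 2) * (H2 d0 + (1 / 2) * H2 d1 + (1 / 4) * H2 d2) /
      (7 / 4 + d0 + (1 / 2) * d1 + (1 / 4) * d2) ≤ 173 / 500 := by
  obtain ⟨h00, h01⟩ := hd0
  obtain ⟨h10, h11⟩ := hd1
  obtain ⟨h20, h21⟩ := hd2
  have e0 := H2_le_of_zpow_le_pow (p := 361 / 1000) (a := -25) (n := 17) (b := -11) (m := 17)
    h00 h01 (by norm_num) (by norm_num) (by norm_num) (by norm_num) (by norm_num) (by norm_num)
  have e1 := H2_le_of_zpow_le_pow (p := 34 / 100) (a := -39) (n := 25) (b := -3) (m := 5)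
    h10 h11 (by norm_num) (by norm_num) (by norm_num) (by norm_num) (by norm_num) (by norm_num)
  have e2 := H2_le_of_zpow_le_pow (p := 3 / 10) (a := -40) (n := 23) (b := -14) (m := 27)
    h20 h21 (by norm_num) (by norm_num) (by norm_num) (by norm_num) (by norm_num) (by norm_num)
  push_cast at e0 e1 e2
  rw [div_le_iff₀ (by linarith)]
  linarith

/-- The strict inequality between the Q-graph feedback upper bound for the `(2,∞)`-RLL
input-constrained BEC at `ε = 1/2` (the supremum on the left) and the non-causal
capacity of the same channel (the maximum on the right):
`sup_{δ₀,δ₁,δ₂∈[0,1], δ₀+δ₁+δ₂≤1} [(1/2)(H₂(δ₀) + (1/2)H₂(δ₁) + (1/4)H₂(δ₂))] /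
  [7/4 + δ₀ + (1/2)δ₁ + (1/4)δ₂]  <  max_{δ∈[0,1/2]} H₂(δ)/(2+2δ)`. -/
theorem feedback_upper_bound_lt_noncausal_capacity :
    ∃ M : ℝ,
      IsGreatest ((fun δ : ℝ => H2 δ / (2 + 2 * δ)) '' Set.Icc 0 (1 / 2)) M ∧
      sSup {r : ℝ | ∃ d0 d1 d2 : ℝ,
          d0 ∈ Set.Icc (0 : ℝ) 1 ∧ d1 ∈ Set.Icc (0 : ℝ) 1 ∧ d2 ∈ Set.Icc (0 : ℝ) 1 ∧
          d0 + d1 + d2 ≤ 1 ∧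
          r = (1 / 2) * (H2 d0 + (1 / 2) * H2 d1 + (1 / 4) * H2 d2) /
                (7 / 4 + d0 + (1 / 2) * d1 + (1 / 4) * d2)} < M := by
  refine ⟨logb 2 φ / 2, isGreatest_H2_div_two_add_two_mul, ?_⟩
  have hφ := nine_div_thirteen_le_logb_two_goldenRatio
  refine (Real.sSup_le ?_ (by norm_num : (0 : ℝ) ≤ 173 / 500)).trans_lt (by linarith)
  rintro r ⟨d0, d1, d2, hd0, hd1, hd2, hsum, rfl⟩
  exact feedback_ratio_le hd0 hd1 hd2 hsum
end

section
/- Let c > 0 be a real number. A point δ ∈ (0,1) is a critical point of the function f(δ) = H₂(δ)/(c + δ) (i.e., f′(δ) = 0) if and only if (1−δ)^{c+1} = δ^{c}. Moreover, the equation (1−δ)^{c+1} = δ^{c} has a unique solution δ* in (0,1), this solution satisfies δ* < 1/2, and if in addition 2^{c+1} ≥ 3 then δ* ≥ 1/3. -/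
/-!
Since `H₂ = binEntropy / log 2` and `binEntropy' x = log (1 - x) - log x`, the numerator of the
derivative of `H₂ x / (c + x)` is `((c + 1) log (1 - x) - c log x) / log 2`, the logarithm of
`(1 - x) ^ (c + 1) / x ^ c` up to that factor. This gap is strictly decreasing on `(0, 1)`, positive
near `0` and equal to `-log 2` at `1 / 2`, so it has exactly one zero, lying below `1 / 2`. Its value
at `1 / 3` is `(c + 1) log 2 - log 3`, nonnegative when `2 ^ (c + 1) ≥ 3`, which puts the zero at or
above `1 / 3`.
-/

open Real Set

lemma H2_eq_binEntropy_div_log_two_s16 : H2 = fun x => binEntropy x / log 2 := by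
  funext x
  simp only [H2, binEntropy, logb, log_inv]
  ring

lemma hasDerivAt_H2 {x : ℝ} (hx₀ : x ≠ 0) (hx₁ : x ≠ 1) :
    HasDerivAt H2 ((log (1 - x) - log x) / log 2) x := by
  rw [H2_eq_binEntropy_div_log_two_s16]
  exact (hasDerivAt_binEntropy hx₀ hx₁).div_const _

noncomputable def criticalGap (c x : ℝ) : ℝ :=
  (c + 1) * log (1 - x) - c * log x

variable {c x : ℝ}

lemma one_sub_rpow_eq_rpow_iff_criticalGap_eq_zero (hx : x ∈ Ioo (0 : ℝ) 1) :
    (1 - x) ^ (c + 1) = x ^ c ↔ criticalGap c x = 0 := by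
  rw [rpow_def_of_pos (sub_pos.2 hx.2), rpow_def_of_pos hx.1, exp_eq_exp, criticalGap, sub_eq_zero,
    mul_comm, mul_comm c]

lemma hasDerivAt_H2_div (hx₀ : x ≠ 0) (hx₁ : x ≠ 1) (hcx : c + x ≠ 0) :
    HasDerivAt (fun y => H2 y / (c + y)) (criticalGap c x / log 2 / (c + x) ^ 2) x := by
  refine ((hasDerivAt_H2 hx₀ hx₁).div ((hasDerivAt_id x).const_add c) hcx).congr_deriv ?_
  simp only [H2_eq_binEntropy_div_log_two_s16, binEntropy, criticalGap, log_inv, id]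
  field_simp
  ring

lemma criticalGap_strictAntiOn (hc : 0 ≤ c) : StrictAntiOn (criticalGap c) (Ioo 0 1) := by
  intro x hx y hy hxy
  have h₁ : log (1 - y) < log (1 - x) := log_lt_log (sub_pos.2 hy.2) (by linarith)
  have h₂ : log x < log y := log_lt_log hx.1 hxy
  simp only [criticalGap]
  nlinarith

lemma continuousOn_criticalGap : ContinuousOn (criticalGap c) (Ioo 0 1) := by
  unfold criticalGap
  fun_prop (disch := grind)

lemma criticalGap_half : criticalGap c (1 / 2) = -log 2 := by
  rw [criticalGap, show (1 : ℝ) - 1 / 2 = 2⁻¹ by norm_num, one_div, log_inv]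
  ring

lemma criticalGap_third : criticalGap c (1 / 3) = (c + 1) * log 2 - log 3 := by
  norm_num [criticalGap, log_div]
  ring

-- At `a = 2 ^ (-(c + 1) / c)` the gap is `(c + 1) * log (2 * (1 - a))`.
lemma exists_criticalGap_pos (hc : 0 < c) : ∃ a ∈ Ioo (0 : ℝ) (1 / 2), 0 < criticalGap c a := by
  set a := exp (-(c + 1) * log 2 / c)
  have hlog2 : 0 < log 2 := log_pos one_lt_two
  have ha : a < 1 / 2 := by
    rw [one_div, ← exp_log (inv_pos.2 two_pos), log_inv, exp_lt_exp, div_lt_iff₀ hc]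
    nlinarith
  have hlog_one_sub : -log 2 < log (1 - a) := by
    rw [← log_inv]
    exact log_lt_log (by norm_num) (by linarith)
  refine ⟨a, ⟨exp_pos _, ha⟩, ?_⟩
  rw [criticalGap, log_exp, mul_div_cancel₀ _ hc.ne']
  nlinarith

lemma exists_criticalGap_eq_zero (hc : 0 < c) : ∃ δ ∈ Ioo (0 : ℝ) (1 / 2), criticalGap c δ = 0 := by
  obtain ⟨a, ⟨ha₀, ha⟩, hpos⟩ := exists_criticalGap_pos hc
  have hcont : ContinuousOn (criticalGap c) (Icc a (1 / 2)) :=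
    continuousOn_criticalGap.mono fun x hx => ⟨ha₀.trans_le hx.1, by linarith [hx.2]⟩
  have hneg : criticalGap c (1 / 2) < 0 := by
    rw [criticalGap_half]; exact neg_neg_of_pos (log_pos one_lt_two)
  obtain ⟨δ, hδ, hzero⟩ := intermediate_value_Ioo' ha.le hcont ⟨hneg, hpos⟩
  exact ⟨δ, ⟨ha₀.trans hδ.1, hδ.2⟩, hzero⟩

/-- Let `c > 0`.  A point `δ ∈ (0,1)` is a critical point of `f(δ) = H₂(δ)/(c+δ)`
(i.e. `f′(δ) = 0`) iff `(1−δ)^{c+1} = δ^c` (real powers).  Moreover this equation has a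
unique solution `δ*` in `(0,1)`, it satisfies `δ* < 1/2`, and if `2^{c+1} ≥ 3` then
`δ* ≥ 1/3`. -/
theorem critical_point_characterization (c : ℝ) (hc : 0 < c) :
    (∀ δ ∈ Set.Ioo (0 : ℝ) 1,
      (deriv (fun x : ℝ => H2 x / (c + x)) δ = 0 ↔ (1 - δ) ^ (c + 1) = δ ^ c)) ∧
    ∃ δs : ℝ, δs ∈ Set.Ioo (0 : ℝ) 1 ∧ (1 - δs) ^ (c + 1) = δs ^ c ∧
      (∀ x ∈ Set.Ioo (0 : ℝ) 1, (1 - x) ^ (c + 1) = x ^ c → x = δs) ∧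
      δs < 1 / 2 ∧ ((3 : ℝ) ≤ (2 : ℝ) ^ (c + 1) → 1 / 3 ≤ δs) := by
  have hlog2 : log 2 ≠ 0 := (log_pos one_lt_two).ne'
  refine ⟨fun δ hδ => ?_, ?_⟩
  · have hcδ : (c + δ) ^ 2 ≠ 0 := by have := hδ.1; positivity
    rw [(hasDerivAt_H2_div hδ.1.ne' hδ.2.ne (by linarith [hδ.1])).deriv,
      one_sub_rpow_eq_rpow_iff_criticalGap_eq_zero hδ, div_eq_zero_iff, div_eq_zero_iff]
    simp [hlog2, hcδ]
  obtain ⟨δ, ⟨hδ₀, hδ_half⟩, hzero⟩ := exists_criticalGap_eq_zero hc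
  have hδ : δ ∈ Ioo (0 : ℝ) 1 := ⟨hδ₀, by linarith⟩
  refine ⟨δ, hδ, (one_sub_rpow_eq_rpow_iff_criticalGap_eq_zero hδ).2 hzero,
    fun x hx hx₀ => ?_, hδ_half, fun h3 => ?_⟩
  · exact (criticalGap_strictAntiOn hc.le).injOn hx hδ
      (((one_sub_rpow_eq_rpow_iff_criticalGap_eq_zero hx).1 hx₀).trans hzero.symm)
  · have hthird : 0 ≤ criticalGap c (1 / 3) := by
      rw [criticalGap_third, sub_nonneg, ← log_rpow two_pos]
      exact log_le_log (by norm_num) h3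
    by_contra! hlt
    linarith [criticalGap_strictAntiOn hc.le hδ ⟨by norm_num, by norm_num⟩ hlt]
end
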